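/- Let (x_s,ξ_s)_{s≥0} be a curve in ℝ^d × (ℝ^d ∖ {0}) such that |d/ds (z_s, ξ_s)| ≤ C⟨x_s⟩^{−1−ε} for some ε > 0, where z_s := x_s − x₀ − (3/2)∫₀^s |ξ_σ|^{−1/2} ξ_σ dσ, and such that the Lebesgue measure of { s ≥ 0 : ⟨x_s⟩^{−1} > t } is at most C√(t^{−2}−1) for 0 < t ≤ 1. Then ∫₀^∞ ⟨x_s⟩^{−1−ε} ds < ∞, and consequently (z_s, ξ_s) converges to a limit (z_∞, ξ_∞) ∈ ℝ^d × ℝ^d as s → ∞. -/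

import Mathlib

/-! The weight `g = ⟨x⟩^{-(1+ε)}` takes values in `(0, 1]`, and `g s > t` forces
`⟨x_s⟩⁻¹ > t^{1/(1+ε)}`, so the hypothesis on level sets bounds the distribution function of `g`
by `C t^{-1/(1+ε)}`, which is integrable on `(0, 1)`; the layer-cake formula then gives
`∫₀^∞ g < ∞`. Since `g` dominates the derivative of `s ↦ (z_s, ξ_s)`, that derivative is integrable
on `(0, ∞)` and the curve converges. -/

open MeasureTheory Filter Set
open scoped Topology

noncomputable section

variable (d : ℕ)

abbrev Ed := EuclideanSpace ℝ (Fin d)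

theorem Real.lt_inv_of_lt_rpow_neg {t q A : ℝ} (ht : 0 < t) (hq : 0 < q) (hA : 0 < A)
    (h : t < A ^ (-q)) : t ^ q⁻¹ < A⁻¹ := by
  rw [Real.rpow_neg hA.le, ← Real.inv_rpow hA.le] at h
  calc t ^ q⁻¹ < (A⁻¹ ^ q) ^ q⁻¹ := Real.rpow_lt_rpow ht.le h (inv_pos.2 hq)
    _ = A⁻¹ := Real.rpow_rpow_inv (inv_nonneg.2 hA.le) hq.ne'

theorem Real.sqrt_rpow_neg_two_sub_one_le {u : ℝ} (hu : 0 < u) :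
    √(u ^ (-2 : ℝ) - 1) ≤ u⁻¹ :=
  calc √(u ^ (-2 : ℝ) - 1) ≤ √(u ^ (-2 : ℝ)) := Real.sqrt_le_sqrt (by linarith)
    _ = u⁻¹ := by
      rw [Real.sqrt_eq_rpow, ← Real.rpow_mul hu.le]
      norm_num [Real.rpow_neg_one]

theorem one_le_one_add_norm_sq_rpow_half {E : Type*} [SeminormedAddGroup E] (v : E) :
    1 ≤ (1 + ‖v‖ ^ 2) ^ ((1 : ℝ) / 2) :=
  Real.one_le_rpow (by nlinarith [sq_nonneg ‖v‖]) (by norm_num)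

section Layercake

variable {α : Type*} [MeasurableSpace α] {μ : Measure α} {g : α → ℝ}

theorem integrable_of_measure_lt_le {φ : ℝ → ℝ} (hg : AEStronglyMeasurable g μ)
    (hg0 : 0 ≤ᵐ[μ] g) (hφ : IntegrableOn φ (Ioi 0))
    (h : ∀ t > 0, μ {a | t < g a} ≤ ENNReal.ofReal (φ t)) : Integrable g μ := by
  refine ⟨hg, ?_⟩
  rw [hasFiniteIntegral_iff_ofReal hg0, lintegral_eq_lintegral_meas_lt μ hg0 hg.aemeasurable]
  exact (setLIntegral_mono' measurableSet_Ioi h).trans_lt hφ.lintegral_lt_top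

theorem integrable_of_measure_lt_le_rpow_neg {C p : ℝ} (hg : AEStronglyMeasurable g μ)
    (hg0 : 0 ≤ᵐ[μ] g) (hg1 : ∀ᵐ a ∂μ, g a ≤ 1) (hp : p < 1)
    (h : ∀ t ∈ Ioo (0 : ℝ) 1, μ {a | t < g a} ≤ ENNReal.ofReal (C * t ^ (-p))) :
    Integrable g μ := by
  have hφ : IntegrableOn (fun t : ℝ => C * t ^ (-p)) (Ioo 0 1) :=
    ((intervalIntegral.intervalIntegrable_rpow' (by linarith)).1.mono_set
      Ioo_subset_Ioc_self).const_mul C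
  refine integrable_of_measure_lt_le hg hg0 (hφ.integrable_indicator measurableSet_Ioo).integrableOn ?_
  intro t ht
  by_cases ht1 : t < 1
  · rw [indicator_of_mem (show t ∈ Ioo 0 1 from ⟨ht, ht1⟩)]
    exact h t ⟨ht, ht1⟩
  · exact (measure_mono_null (fun a ha => not_le.2 ((not_lt.1 ht1).trans_lt ha))
      (ae_iff.1 hg1)).trans_le zero_le

end Layercake

theorem volume_Ici_lt_rpow_neg_le {A : ℝ → ℝ} {C q : ℝ} (hA : ∀ s, 0 < A s) (hC : 0 ≤ C)
    (hq : 0 < q)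
    (hmeas : ∀ t : ℝ, 0 < t → t ≤ 1 →
      volume {s : ℝ | 0 ≤ s ∧ t < (A s)⁻¹} ≤ ENNReal.ofReal (C * √(t ^ (-(2 : ℝ)) - 1)))
    (t : ℝ) (ht : t ∈ Ioo (0 : ℝ) 1) :
    volume.restrict (Ici 0) {s | t < A s ^ (-q)} ≤ ENNReal.ofReal (C * t ^ (-q⁻¹)) := by
  have hu : 0 < t ^ q⁻¹ := Real.rpow_pos_of_pos ht.1 _
  have hsub : {s | t < A s ^ (-q)} ∩ Ici 0 ⊆ {s | 0 ≤ s ∧ t ^ q⁻¹ < (A s)⁻¹} :=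
    fun s ⟨hts, hs⟩ => ⟨hs, Real.lt_inv_of_lt_rpow_neg ht.1 hq (hA s) hts⟩
  rw [Measure.restrict_apply' measurableSet_Ici]
  refine (measure_mono hsub).trans ((hmeas _ hu (Real.rpow_le_one ht.1.le ht.2.le
    (inv_nonneg.2 hq.le))).trans (ENNReal.ofReal_le_ofReal (mul_le_mul_of_nonneg_left ?_ hC)))
  rw [Real.rpow_neg ht.1.le]
  exact Real.sqrt_rpow_neg_two_sub_one_le hu

theorem continuous_of_eq_sub_primitive {E : Type*} [NormedAddCommGroup E] [NormedSpace ℝ E]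
    {x z h : ℝ → E} (c : ℝ) (hzc : Continuous z) (hh : Continuous h)
    (hz : ∀ s, z s = x s - x 0 - c • ∫ σ in (0 : ℝ)..s, h σ) : Continuous x := by
  have hprim : Continuous fun s => ∫ σ in (0 : ℝ)..s, h σ :=
    intervalIntegral.continuous_primitive (fun a b => hh.intervalIntegrable a b) 0
  have hsum : Continuous fun s => z s + x 0 + c • ∫ σ in (0 : ℝ)..s, h σ := by fun_prop
  refine hsum.congr fun s => ?_
  rw [hz s]
  abel

theorem exists_tendsto_of_hasDerivAt_of_norm_le {E : Type*} [NormedAddCommGroup E]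
    [NormedSpace ℝ E] [CompleteSpace E] {f f' : ℝ → E} {g : ℝ → ℝ} {a : ℝ}
    (hf : ∀ s ∈ Ioi a, HasDerivAt f (f' s) s) (hg : IntegrableOn g (Ioi a))
    (hle : ∀ s ∈ Ioi a, ‖f' s‖ ≤ g s) : ∃ l, Tendsto f atTop (𝓝 l) := by
  have hmeas : AEStronglyMeasurable f' (volume.restrict (Ioi a)) :=
    (stronglyMeasurable_deriv f).aestronglyMeasurable.congr
      ((ae_restrict_iff' measurableSet_Ioi).2 (ae_of_all _ fun s hs => (hf s hs).deriv))
  exact ⟨_, tendsto_limUnder_of_hasDerivAt_of_integrableOn_Ioi hf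
    (hg.mono' hmeas ((ae_restrict_iff' measurableSet_Ioi).2 (ae_of_all _ hle)))⟩

theorem curve_converges_at_infinity
    (x ξ : ℝ → Ed d) (z z' ξ' : ℝ → Ed d) (C ε : ℝ) (hC : 0 < C) (hε : 0 < ε)
    (hξne : ∀ s, ξ s ≠ 0)
    (hz : ∀ s : ℝ, z s =
      x s - x 0 - ((3 : ℝ) / 2) • ∫ σ in (0:ℝ)..s, ‖ξ σ‖ ^ (-(1 : ℝ) / 2) • ξ σ)
    (hz' : ∀ s, HasDerivAt z (z' s) s)
    (hξ' : ∀ s, HasDerivAt ξ (ξ' s) s)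
    (hbound : ∀ s : ℝ, 0 ≤ s →
      ‖z' s‖ + ‖ξ' s‖ ≤ C * ((1 + ‖x s‖ ^ 2) ^ ((1 : ℝ) / 2)) ^ (-(1 + ε)))
    (hmeas : ∀ t : ℝ, 0 < t → t ≤ 1 →
      volume {s : ℝ | 0 ≤ s ∧ t < ((1 + ‖x s‖ ^ 2) ^ ((1 : ℝ) / 2))⁻¹} ≤
        ENNReal.ofReal (C * Real.sqrt (t ^ (-(2 : ℝ)) - 1))) :
    IntegrableOn (fun s : ℝ => ((1 + ‖x s‖ ^ 2) ^ ((1 : ℝ) / 2)) ^ (-(1 + ε)))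
        (Set.Ici (0 : ℝ)) ∧
    ∃ zl ξl : Ed d, Tendsto (fun s => (z s, ξ s)) atTop (𝓝 (zl, ξl)) := by
  have hξc : Continuous ξ := continuous_iff_continuousAt.2 fun s => (hξ' s).continuousAt
  have hxc : Continuous x := continuous_of_eq_sub_primitive _
    (continuous_iff_continuousAt.2 fun s => (hz' s).continuousAt)
    ((hξc.norm.rpow_const fun s => Or.inl (norm_ne_zero_iff.2 (hξne s))).smul hξc) hz
  have hA1 := fun s => one_le_one_add_norm_sq_rpow_half (x s)
  have hA0 := fun s => zero_lt_one.trans_le (hA1 s)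
  have hint : IntegrableOn (fun s => ((1 + ‖x s‖ ^ 2) ^ ((1 : ℝ) / 2)) ^ (-(1 + ε))) (Ici 0) :=
    integrable_of_measure_lt_le_rpow_neg
      (((continuous_const.add (hxc.norm.pow 2)).rpow_const fun _ => Or.inr (by norm_num)).rpow_const
        fun s => Or.inl (hA0 s).ne').aestronglyMeasurable
      (ae_of_all _ fun s => (Real.rpow_pos_of_pos (hA0 s) _).le)
      (ae_of_all _ fun s => Real.rpow_le_one_of_one_le_of_nonpos (hA1 s) (by linarith))
      (inv_lt_one_of_one_lt₀ (by linarith))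
      (volume_Ici_lt_rpow_neg_le hA0 hC.le (by linarith) hmeas)
  obtain ⟨⟨zl, ξl⟩, hlim⟩ := exists_tendsto_of_hasDerivAt_of_norm_le
    (fun s _ => (hz' s).prodMk (hξ' s)) ((hint.mono_set Ioi_subset_Ici_self).const_mul C)
    fun s hs => (max_le_add_of_nonneg (norm_nonneg _) (norm_nonneg _)).trans (hbound s hs.le)
  exact ⟨hint, zl, ξl, hlim⟩
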